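/- arXiv:2103.14868 — 2 statements merged into one kernel-verified Lean document; each statement's English description precedes it below -/
import Mathlib

section
/- Fix quaternions λ₁,…,λ_{ℓ+1} all lying in a common commutative slice ℂ_I, and define on ℂ_I the functions g_ℓ(z) = ∑_{n=ℓ-1}^∞ (zⁿ/n!) ∑_{|K|=n-ℓ+1} λ₁^{k₁}⋯λ_ℓ^{k_ℓ}. Then g_{ℓ+1}'(z) - g_{ℓ+1}(z)λ_{ℓ+1} = g_ℓ(z) for all z ∈ ℂ_I. -/
/-! The inner sums are the complete homogeneous symmetric polynomials `h_n(λ₁, …, λ_k)`.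
Splitting off the exponent of the last variable gives
`h_{n+1}(λ₁, …, λ_{ℓ+1}) = h_{n+1}(λ₁, …, λ_ℓ) + h_n(λ₁, …, λ_{ℓ+1}) λ_{ℓ+1}`,
and `‖h_n‖ ≤ (∑ ‖λ_i‖)ⁿ` by the multinomial theorem, so both series are entire and may be
differentiated termwise. Differentiating `z^{n+ℓ}/(n+ℓ)!` gives `z^{n+ℓ-1}/(n+ℓ-1)!`, and the
recursion for `h_n` splits the differentiated series into `g_ℓ + g_{ℓ+1} λ_{ℓ+1}`. -/

open Finset Nat

section CompleteHomogeneous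

variable {R : Type*} [CommSemiring R]

def completeHomogeneous {k : ℕ} (f : Fin k → R) (n : ℕ) : R :=
  ∑ K ∈ antidiagonalTuple k n, ∏ i, f i ^ K i

@[simp]
lemma completeHomogeneous_zero {k : ℕ} (f : Fin k → R) : completeHomogeneous f 0 = 1 := by
  simp [completeHomogeneous, antidiagonalTuple_zero_right]

lemma sum_antidiagonalTuple_filter_last_eq_zero {M : Type*} [AddCommMonoid M] (k n : ℕ)
    (F : (Fin (k + 1) → ℕ) → M) :
    ∑ K ∈ antidiagonalTuple (k + 1) n with K (Fin.last k) = 0, F K =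
      ∑ K ∈ antidiagonalTuple k n, F (Fin.snoc K 0) := by
  have snoc_init {K : Fin (k + 1) → ℕ} (h : K (Fin.last k) = 0) : Fin.snoc (Fin.init K) 0 = K := by
    rw [← h, Fin.snoc_init_self]
  refine sum_nbij' Fin.init (Fin.snoc · 0) ?_ ?_ ?_ ?_ ?_ <;>
    simp +contextual only [mem_filter, mem_antidiagonalTuple, Fin.sum_univ_castSucc,
      Fin.snoc_castSucc, Fin.snoc_last, Fin.init_snoc, add_zero, and_self, and_imp, snoc_init,
      implies_true]
  all_goals intro K; simp only [Fin.init]; omega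

lemma sum_antidiagonalTuple_filter_last_ne_zero {M : Type*} [AddCommMonoid M] (k n : ℕ)
    (F : (Fin (k + 1) → ℕ) → M) :
    ∑ K ∈ antidiagonalTuple (k + 1) (n + 1) with K (Fin.last k) ≠ 0, F K =
      ∑ K ∈ antidiagonalTuple (k + 1) n, F (Fin.snoc (Fin.init K) (K (Fin.last k) + 1)) := by
  have snoc_init {K : Fin (k + 1) → ℕ} (h : K (Fin.last k) ≠ 0) :
      Fin.snoc (Fin.init K) (K (Fin.last k) - 1 + 1) = K := by
    rw [Nat.sub_add_cancel (Nat.one_le_iff_ne_zero.2 h), Fin.snoc_init_self]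
  refine sum_nbij' (fun K => Fin.snoc (Fin.init K) (K (Fin.last k) - 1))
    (fun K => Fin.snoc (Fin.init K) (K (Fin.last k) + 1)) ?_ ?_ ?_ ?_ ?_ <;>
    simp +contextual only [ne_eq, mem_filter, mem_antidiagonalTuple, Fin.sum_univ_castSucc,
      Fin.snoc_castSucc, Fin.snoc_last, Fin.init_snoc, Fin.snoc_init_self, add_tsub_cancel_right,
      Nat.add_eq_zero_iff, one_ne_zero, and_false, not_false_eq_true, and_true, and_imp, snoc_init,
      implies_true]
  all_goals intro K; simp only [Fin.init]; omega

lemma completeHomogeneous_succ {k : ℕ} (f : Fin (k + 1) → R) (n : ℕ) :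
    completeHomogeneous f (n + 1) =
      completeHomogeneous (fun i => f i.castSucc) (n + 1) +
        completeHomogeneous f n * f (Fin.last k) := by
  rw [completeHomogeneous, ← sum_filter_add_sum_filter_not _ (fun K => K (Fin.last k) = 0),
    sum_antidiagonalTuple_filter_last_eq_zero, sum_antidiagonalTuple_filter_last_ne_zero,
    completeHomogeneous, completeHomogeneous, sum_mul]
  congr 1 <;> refine sum_congr rfl fun K _ => ?_ <;>
    simp [Fin.prod_univ_castSucc, pow_succ, mul_assoc, Fin.init]

lemma norm_completeHomogeneous_le {𝕜 : Type*} [NormedField 𝕜] {k : ℕ} (f : Fin k → 𝕜) (n : ℕ) :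
    ‖completeHomogeneous f n‖ ≤ (∑ i, ‖f i‖) ^ n := by
  rw [sum_pow_eq_sum_piAntidiag, piAntidiag_univ_fin_eq_antidiagonalTuple]
  refine (norm_sum_le _ _).trans (sum_le_sum fun K _ => ?_)
  rw [norm_prod]
  simp only [norm_pow]
  refine le_mul_of_one_le_left (by positivity) ?_
  exact_mod_cast multinomial_pos _ _

end CompleteHomogeneous

section ShiftedExpSeries

variable {𝕜 : Type*} [RCLike 𝕜]

noncomputable def shiftedExpSeries (c : ℕ → 𝕜) (j : ℕ) (z : 𝕜) : 𝕜 :=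
  ∑' n : ℕ, z ^ (n + j) / (n + j)! * c n

lemma summable_norm_shiftedExpSeries {c : ℕ → 𝕜} {C r : ℝ} (hc : ∀ n, ‖c n‖ ≤ C * r ^ n)
    (j : ℕ) (z : 𝕜) : Summable fun n => ‖z ^ (n + j) / (n + j)! * c n‖ := by
  refine .of_nonneg_of_le (fun n => norm_nonneg _) (fun n => ?_)
    ((Real.summable_pow_div_factorial (‖z‖ * r)).mul_left (‖z‖ ^ j * C))
  calc ‖z ^ (n + j) / (n + j)! * c n‖ = ‖z‖ ^ (n + j) / (n + j)! * ‖c n‖ := by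
        simp [norm_mul, norm_div, norm_pow]
    _ ≤ ‖z‖ ^ (n + j) / n ! * (C * r ^ n) := by
        gcongr
        · exact Nat.le_add_right n j
        · exact hc n
    _ = ‖z‖ ^ j * C * ((‖z‖ * r) ^ n / n !) := by ring

lemma hasDerivAt_shiftedExpSeries {c : ℕ → 𝕜} {C r : ℝ} (hc : ∀ n, ‖c n‖ ≤ C * r ^ n)
    (j : ℕ) (z : 𝕜) : HasDerivAt (shiftedExpSeries c (j + 1)) (shiftedExpSeries c j z) z := by
  set w : 𝕜 := ((‖z‖ + 1 : ℝ) : 𝕜)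
  have hw : ‖w‖ = ‖z‖ + 1 := by
    simp only [w, RCLike.norm_ofReal]; exact abs_of_nonneg (by positivity)
  have hz : z ∈ Metric.ball (0 : 𝕜) ‖w‖ := by simp [hw]
  unfold shiftedExpSeries
  refine hasDerivAt_tsum_of_isPreconnected
    (g := fun n y => y ^ (n + (j + 1)) / (n + (j + 1))! * c n)
    (g' := fun n y => y ^ (n + j) / (n + j)! * c n) (summable_norm_shiftedExpSeries hc j w)
    Metric.isOpen_ball (convex_ball _ _).isPreconnected (fun n y _ => ?_) (fun n y hy => ?_) hz
    (summable_norm_shiftedExpSeries hc (j + 1) z).of_norm hz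
  · have hpow := ((hasDerivAt_pow (n + j + 1) y).div_const ((n + j + 1)! : 𝕜)).mul_const (c n)
    refine hpow.congr_deriv ?_
    rw [Nat.add_sub_cancel, factorial_succ, Nat.cast_mul,
      mul_div_mul_left _ _ (Nat.cast_ne_zero.2 (succ_ne_zero _))]
  · rw [mem_ball_zero_iff] at hy
    simp only [norm_mul, norm_div, norm_pow]
    gcongr

lemma shiftedExpSeries_eq_add_mul {b c : ℕ → 𝕜} {a : 𝕜} {j : ℕ} {z : 𝕜}
    (hb : Summable fun n => z ^ (n + j) / (n + j)! * b n)
    (hc : Summable fun n => z ^ (n + (j + 1)) / (n + (j + 1))! * c n)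
    (h_zero : c 0 = b 0) (h_succ : ∀ n, c (n + 1) = b (n + 1) + c n * a) :
    shiftedExpSeries c j z = shiftedExpSeries b j z + shiftedExpSeries c (j + 1) z * a := by
  have hb_tail : HasSum (fun n => z ^ (n + 1 + j) / (n + 1 + j)! * b (n + 1))
      (shiftedExpSeries b j z - z ^ j / j ! * b 0) := by
    simpa [shiftedExpSeries] using (hasSum_nat_add_iff' 1).mpr hb.hasSum
  have hc_tail : HasSum (fun n => z ^ (n + 1 + j) / (n + 1 + j)! * c (n + 1))
      (shiftedExpSeries b j z - z ^ j / j ! * b 0 + shiftedExpSeries c (j + 1) z * a) := by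
    refine (hb_tail.add (hc.hasSum.mul_right a)).congr_fun fun n => ?_
    rw [h_succ, show n + (j + 1) = n + 1 + j by omega]
    ring
  calc shiftedExpSeries c j z
      = z ^ (0 + j) / (0 + j)! * c 0 +
          (shiftedExpSeries b j z - z ^ j / j ! * b 0 + shiftedExpSeries c (j + 1) z * a) :=
        hc_tail.zero_add.tsum_eq
    _ = shiftedExpSeries b j z + shiftedExpSeries c (j + 1) z * a := by
        rw [h_zero, zero_add]
        ring

end ShiftedExpSeries

/-- The recursion D_{λ_{ℓ+1}} g_{ℓ+1} = g_ℓ for generalized exponentials on a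
commutative slice ℂ_I ≅ ℂ. -/
theorem stmt_9 (ℓ : ℕ) (hℓ : 1 ≤ ℓ) (lam : Fin (ℓ + 1) → ℂ)
    (g gsucc : ℂ → ℂ)
    (hgsucc : ∀ z, gsucc z = ∑' n : ℕ, z ^ (n + ℓ) / (n + ℓ).factorial *
      ∑ K ∈ Finset.Nat.antidiagonalTuple (ℓ + 1) n, ∏ i, lam i ^ K i)
    (hg : ∀ z, g z = ∑' n : ℕ, z ^ (n + (ℓ - 1)) / (n + (ℓ - 1)).factorial *
      ∑ K ∈ Finset.Nat.antidiagonalTuple ℓ n, ∏ i : Fin ℓ, lam i.castSucc ^ K i) :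
    ∀ z, HasDerivAt gsucc (g z + gsucc z * lam (Fin.last ℓ)) z := by
  obtain ⟨m, rfl⟩ : ∃ m, ℓ = m + 1 := ⟨ℓ - 1, by omega⟩
  intro z
  have growth {k : ℕ} (f : Fin k → ℂ) (n : ℕ) :
      ‖completeHomogeneous f n‖ ≤ 1 * (∑ i, ‖f i‖) ^ n := by
    simpa using norm_completeHomogeneous_le f n
  have hgsucc' : gsucc = shiftedExpSeries (completeHomogeneous lam) (m + 1) := funext hgsucc
  have hg' : g = shiftedExpSeries (completeHomogeneous fun i => lam i.castSucc) m := funext hg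
  rw [hgsucc', hg', ← shiftedExpSeries_eq_add_mul
    (summable_norm_shiftedExpSeries (growth _) m z).of_norm
    (summable_norm_shiftedExpSeries (growth lam) (m + 1) z).of_norm
    (by simp) (completeHomogeneous_succ lam)]
  exact hasDerivAt_shiftedExpSeries (growth lam) m z
end

section
/- Let λ ∈ ℂ_I be a nonzero element of a commutative slice of ℍ and let h(z) = ∑_{n=0}^∞ zⁿaₙ with aₙ ∈ ℂ_I satisfying n!|aₙ| ≤ C(n+1)^d|λ|ⁿ. Then the function f(z) = ∑_{n=1}^∞ (zⁿ/n!) ∑_{k=0}^{n-1} k! aₖ λ^{n-k-1} satisfies f'(z) - f(z)λ = h(z) for all z ∈ ℂ_I, and f(0) = 0. -/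
/-!
Writing `f z = ∑ zⁿ cₙ`, the coefficients `cₙ` satisfy `(n + 1) cₙ₊₁ = aₙ + λ cₙ`, which is
`f' = h + f λ` read off coefficientwise. The growth bound `(n + 1)ᵈ ≤ (2ᵈ)ⁿ` puts `aₙ`, and then
inductively `cₙ`, in the class `‖cₙ‖ ≤ K Nⁿ / n!` of coefficients of entire functions of exponential
type, for which the series and its termwise derivative converge locally uniformly.
-/

open Nat Finset

theorem norm_le_pow_div_factorial_of_factorial_mul_norm_le {E : Type*} [SeminormedAddCommGroup E]
    {a : ℕ → E} {C L : ℝ} {d : ℕ} (hL : 0 ≤ L)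
    (hb : ∀ n : ℕ, (n ! : ℝ) * ‖a n‖ ≤ C * (n + 1) ^ d * L ^ n) (n : ℕ) :
    ‖a n‖ ≤ C * (2 ^ d * L) ^ n / n ! := by
  have hC : 0 ≤ C := by
    have := hb 0
    simp only [factorial_zero, cast_one, one_mul, CharP.cast_eq_zero, zero_add, one_pow, mul_one,
      pow_zero] at this
    exact (norm_nonneg _).trans this
  have hpoly : ((n : ℝ) + 1) ^ d ≤ (2 ^ d) ^ n := by
    rw [← pow_mul, mul_comm, pow_mul]
    gcongr
    exact_mod_cast n.lt_two_pow_self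
  rw [le_div_iff₀ (by positivity), mul_comm, mul_pow, ← mul_assoc]
  exact (hb n).trans (by gcongr)

section ExponentialType

variable {𝕜 : Type*} [RCLike 𝕜] {c : ℕ → 𝕜} {K M : ℝ}

theorem summable_pow_mul_of_norm_le (hc : ∀ n, ‖c n‖ ≤ K * M ^ n / n !) (z : 𝕜) :
    Summable fun n => z ^ n * c n := by
  refine .of_norm_bounded ((Real.summable_pow_div_factorial (‖z‖ * M)).mul_left K) fun n => ?_
  calc ‖z ^ n * c n‖ = ‖z‖ ^ n * ‖c n‖ := by rw [norm_mul, norm_pow]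
    _ ≤ ‖z‖ ^ n * (K * M ^ n / n !) := by gcongr; exact hc n
    _ = K * ((‖z‖ * M) ^ n / n !) := by ring

theorem hasDerivAt_tsum_pow_mul_of_norm_le (hc : ∀ n, ‖c n‖ ≤ K * M ^ n / n !) (z : 𝕜) :
    HasDerivAt (fun w => ∑' n, w ^ n * c n) (∑' n, z ^ n * ((n + 1) * c (n + 1))) z := by
  set R := ‖z‖ + 1
  have hderiv (n : ℕ) (y : 𝕜) : HasDerivAt (fun w => w ^ (n + 1) * c (n + 1))
      (y ^ n * ((n + 1) * c (n + 1))) y := by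
    refine ((hasDerivAt_pow (n + 1) y).mul_const (c (n + 1))).congr_deriv ?_
    rw [Nat.add_sub_cancel]
    push_cast
    ring
  have hbound (n : ℕ) (y : 𝕜) (hy : y ∈ Metric.ball 0 R) :
      ‖y ^ n * ((n + 1) * c (n + 1))‖ ≤ K * M * ((R * M) ^ n / n !) := by
    have hy : ‖y‖ ≤ R := by simpa using (Metric.mem_ball.mp hy).le
    have hcn : (n + 1) * ‖c (n + 1)‖ ≤ K * M ^ (n + 1) / n ! :=
      calc (n + 1) * ‖c (n + 1)‖ ≤ (n + 1) * (K * M ^ (n + 1) / (n + 1)!) := by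
            gcongr; exact hc _
        _ = K * M ^ (n + 1) / n ! := by
            rw [factorial_succ, cast_mul]; push_cast; field_simp
    calc ‖y ^ n * ((n + 1) * c (n + 1))‖ = ‖y‖ ^ n * ((n + 1) * ‖c (n + 1)‖) := by
          rw [norm_mul, norm_mul, norm_pow]; norm_cast
      _ ≤ R ^ n * (K * M ^ (n + 1) / n !) := by gcongr
      _ = K * M * ((R * M) ^ n / n !) := by rw [mul_pow, pow_succ]; ring
  have hshift : (fun w => ∑' n, w ^ n * c n) = fun w => c 0 + ∑' n, w ^ (n + 1) * c (n + 1) := by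
    funext w
    simp [(summable_pow_mul_of_norm_le hc w).tsum_eq_zero_add]
  rw [hshift]
  refine (hasDerivAt_tsum_of_isPreconnected ((Real.summable_pow_div_factorial (R * M)).mul_left _)
    Metric.isOpen_ball (convex_ball 0 R).isPreconnected (fun n y _ => hderiv n y) hbound
    (Metric.mem_ball_self (by positivity)) ?_ (by simp [R])).const_add _
  simp

end ExponentialType

/-- Taylor coefficients of `z ↦ ∫₀ᶻ e^{λ(z-w)} h(w) dw`, where `h z = ∑ zⁿ aₙ`. -/
def duhamelCoeff {K : Type*} [Field K] (lam : K) (a : ℕ → K) (n : ℕ) : K :=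
  (∑ k ∈ range n, (k ! : K) * a k * lam ^ (n - k - 1)) / n !

section Duhamel

variable {K : Type*} [Field K] (lam : K) (a : ℕ → K)

@[simp]
theorem duhamelCoeff_zero : duhamelCoeff lam a 0 = 0 := by simp [duhamelCoeff]

theorem succ_mul_duhamelCoeff_succ [CharZero K] (n : ℕ) :
    (n + 1) * duhamelCoeff lam a (n + 1) = a n + lam * duhamelCoeff lam a n := by
  have hsum : ∑ k ∈ range (n + 1), (k ! : K) * a k * lam ^ (n + 1 - k - 1)
      = n ! * a n + lam * ∑ k ∈ range n, (k ! : K) * a k * lam ^ (n - k - 1) := by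
    rw [sum_range_succ, show n + 1 - n - 1 = 0 by omega, pow_zero, mul_one, mul_sum, add_comm]
    congr 1
    refine sum_congr rfl fun k hk => ?_
    rw [show n + 1 - k - 1 = n - k - 1 + 1 by grind, pow_succ]
    ring
  have hn : (n ! : K) ≠ 0 := cast_ne_zero.mpr n.factorial_ne_zero
  have hn1 : (n : K) + 1 ≠ 0 := cast_add_one_ne_zero n
  rw [duhamelCoeff, duhamelCoeff, hsum, factorial_succ, cast_mul, cast_succ]
  field_simp

end Duhamel

theorem norm_duhamelCoeff_le {𝕜 : Type*} [RCLike 𝕜] (lam : 𝕜) {a : ℕ → 𝕜} {K M : ℝ}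
    (hM : 0 ≤ M) (ha : ∀ n, ‖a n‖ ≤ K * M ^ n / n !) (n : ℕ) :
    ‖duhamelCoeff lam a n‖ ≤ K * (M + ‖lam‖ + 1) ^ n / n ! := by
  have hK : 0 ≤ K := by simpa using (norm_nonneg _).trans (ha 0)
  set N := M + ‖lam‖ + 1
  induction n with
  | zero => simpa using hK
  | succ n ih =>
    have hrec :
        ‖duhamelCoeff lam a (n + 1)‖ * (n + 1 : ℕ) = ‖a n + lam * duhamelCoeff lam a n‖ := by
      rw [← succ_mul_duhamelCoeff_succ, norm_mul, mul_comm]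
      norm_cast
    rw [factorial_succ, cast_mul, mul_comm ((n + 1 : ℕ) : ℝ), ← div_div,
      le_div_iff₀ (by positivity), hrec]
    calc ‖a n + lam * duhamelCoeff lam a n‖ ≤ ‖a n‖ + ‖lam‖ * ‖duhamelCoeff lam a n‖ := by
          grw [norm_add_le, norm_mul]
      _ ≤ K * N ^ n / n ! + ‖lam‖ * (K * N ^ n / n !) := by
          gcongr
          exact (ha n).trans (by gcongr; linarith [norm_nonneg lam])
      _ = (1 + ‖lam‖) * (K * N ^ n / n !) := by ring
      _ ≤ N * (K * N ^ n / n !) := by gcongr; linarith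
      _ = K * N ^ (n + 1) / n ! := by rw [pow_succ]; ring

theorem stmt_15_general (lam : ℂ) (a : ℕ → ℂ) (C : ℝ) (d : ℕ)
    (hb : ∀ n : ℕ, (n.factorial : ℝ) * ‖a n‖ ≤ C * (n + 1) ^ d * ‖lam‖ ^ n)
    (h f : ℂ → ℂ)
    (hh : ∀ z, h z = ∑' n : ℕ, z ^ n * a n)
    (hf : ∀ z, f z = ∑' n : ℕ, z ^ n / n.factorial *
      ∑ k ∈ Finset.range n, (k.factorial : ℂ) * a k * lam ^ (n - k - 1)) :
    (∀ z, HasDerivAt f (h z + f z * lam) z) ∧ f 0 = 0 := by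
  have ha := norm_le_pow_div_factorial_of_factorial_mul_norm_le (norm_nonneg lam) hb
  have hc := norm_duhamelCoeff_le lam (by positivity) ha
  have hf_eq : f = fun z => ∑' n, z ^ n * duhamelCoeff lam a n :=
    funext fun z => (hf z).trans (tsum_congr fun n => by rw [duhamelCoeff]; ring)
  have hf_zero (n : ℕ) : (0 : ℂ) ^ n * duhamelCoeff lam a n = 0 := by cases n <;> simp
  refine ⟨fun z => ?_, by simp [hf_eq, hf_zero]⟩
  have htsum : ∑' n, z ^ n * ((n + 1) * duhamelCoeff lam a (n + 1)) = h z + f z * lam := by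
    calc _ = ∑' n, (z ^ n * a n + lam * (z ^ n * duhamelCoeff lam a n)) :=
          tsum_congr fun n => by rw [succ_mul_duhamelCoeff_succ]; ring
      _ = h z + f z * lam := by
          rw [(summable_pow_mul_of_norm_le ha z).tsum_add
            ((summable_pow_mul_of_norm_le hc z).mul_left lam), tsum_mul_left, hh, hf_eq, mul_comm]
  rw [← htsum, hf_eq]
  exact hasDerivAt_tsum_pow_mul_of_norm_le hc z

/-- On a commutative slice ℂ_I ≅ ℂ, the function E_λ(h) solves f' - fλ = h, f(0) = 0. -/
theorem stmt_15 (lam : ℂ) (hlam : lam ≠ 0) (a : ℕ → ℂ) (C : ℝ) (hC : 0 < C) (d : ℕ)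
    (hb : ∀ n : ℕ, (n.factorial : ℝ) * ‖a n‖ ≤ C * (n + 1) ^ d * ‖lam‖ ^ n)
    (h f : ℂ → ℂ)
    (hh : ∀ z, h z = ∑' n : ℕ, z ^ n * a n)
    (hf : ∀ z, f z = ∑' n : ℕ, z ^ n / n.factorial *
      ∑ k ∈ Finset.range n, (k.factorial : ℂ) * a k * lam ^ (n - k - 1)) :
    (∀ z, HasDerivAt f (h z + f z * lam) z) ∧ f 0 = 0 :=
  stmt_15_general lam a C d hb h f hh hf
end
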